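/- arXiv:2405.20229 — 7 statements merged into one kernel-verified Lean document; each statement's English description precedes it below -/
import Mathlib

section
/- Let V be an N-dimensional space of entire functions spanned by f₁, …, f_N, and for t ∈ ℂ define g_V(t, u) to be the determinant of the N × N matrix whose first N−1 rows are (f₁^{(i−1)}(t), …, f_N^{(i−1)}(t)) for i = 1, …, N−1 and whose last row is (f₁(u), …, f_N(u)). If t is not a zero of the Wronskian Wr(f₁, …, f_N), then the N functions u ↦ ∂_t^j g_V(t, u) for j = 0, 1, …, N−1 form a basis of V. -/
/-!
Expanding along the last row, `g(s, u) = ∑ₖ fₖ(u) cₖ(s)`, where the `cₖ` are the cofactors of the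
last row of the Wronskian matrix `W(s)`. Hence `∂ₛʲ g(t, ·) = ∑ₖ cₖ⁽ʲ⁾(t) fₖ`, and it suffices that
the matrix `A = (cₖ⁽ʲ⁾(t))ⱼₖ` be invertible. Put `ψᵢⱼ = ∑ₖ fₖ⁽ⁱ⁾ cₖ⁽ʲ⁾`. From
`W(s) · adj W(s) = det W(s) · 1`, `ψᵢ₀` vanishes identically for `i < N - 1` and
`ψ_{N-1,0} = det W`; the Leibniz rule `ψᵢⱼ' = ψ_{i+1,j} + ψ_{i,j+1}` then gives
`ψᵢⱼ = (-1)ʲ ψ_{i+j,0}` for `i + j ≤ N - 1`. So `W(t) Aᵀ = (ψᵢⱼ(t))` is anti-triangular with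
antidiagonal entries `± det W(t) ≠ 0`.
-/

open Matrix Finset
open scoped ContDiff

section LinearCombination

variable {ι m R M : Type*} [Fintype ι] [CommRing R] [AddCommGroup M] [Module R M]

theorem LinearIndependent.fintypeLinearCombination_comp_row {v : ι → M}
    (hv : LinearIndependent R v) {A : Matrix m ι R} (hA : LinearIndependent R A.row) :
    LinearIndependent R (Fintype.linearCombination R v ∘ A.row) :=
  hA.map' _ <| LinearMap.ker_eq_bot.mpr <|
    linearIndependent_iff_injective_fintypeLinearCombination.mp hv

theorem span_range_fintypeLinearCombination_comp_row (v : ι → M) {A : Matrix m ι R}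
    (hA : Submodule.span R (Set.range A.row) = ⊤) :
    Submodule.span R (Set.range (Fintype.linearCombination R v ∘ A.row))
      = Submodule.span R (Set.range v) := by
  rw [Set.range_comp, Submodule.span_image, hA, Submodule.map_top,
    Fintype.range_linearCombination]

theorem Matrix.span_range_row_eq_top_of_isUnit [DecidableEq ι] {A : Matrix ι ι R}
    (hA : IsUnit A) : Submodule.span R (Set.range A.row) = ⊤ := by
  rw [← range_vecMulLinear, LinearMap.range_eq_top]
  exact vecMul_surjective_iff_isUnit.mpr hA

end LinearCombination

theorem Matrix.det_of_antitriangular {R : Type*} [CommRing R] {n : ℕ}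
    (B : Matrix (Fin n) (Fin n) R) (h : ∀ i j, j < Fin.rev i → B i j = 0) :
    B.det = Equiv.Perm.sign (Fin.revPerm (n := n)) * ∏ i, B i i.rev := by
  have hlower : (B.submatrix id Fin.revPerm).IsLowerTriangular := fun i j hij =>
    h i _ (Fin.rev_lt_rev.mpr hij)
  have hperm := det_permute' Fin.revPerm B
  rw [det_of_isLowerTriangular _ hlower] at hperm
  simp only [submatrix_apply, id_eq, Fin.revPerm_apply] at hperm
  rw [hperm, ← mul_assoc, ← Int.cast_mul, ← Units.val_mul, Int.units_mul_self]
  simp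

section Leibniz

variable {𝕜 ι : Type*} [NontriviallyNormedField 𝕜] [Fintype ι] {c f : ι → 𝕜 → 𝕜}

theorem ContDiff.hasDerivAt_iteratedDeriv {g : 𝕜 → 𝕜} (hg : ContDiff 𝕜 ∞ g) (j : ℕ) (s : 𝕜) :
    HasDerivAt (iteratedDeriv j g) (iteratedDeriv (j + 1) g s) s := by
  rw [iteratedDeriv_succ]
  exact ((hg.differentiable_iteratedDeriv j (by exact_mod_cast WithTop.coe_lt_top _)) s).hasDerivAt

theorem hasDerivAt_sum_iteratedDeriv_mul (hf : ∀ k, ContDiff 𝕜 ∞ (f k))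
    (hc : ∀ k, ContDiff 𝕜 ∞ (c k)) (i j : ℕ) (s : 𝕜) :
    HasDerivAt (fun s => ∑ k, iteratedDeriv i (f k) s * iteratedDeriv j (c k) s)
      (∑ k, iteratedDeriv (i + 1) (f k) s * iteratedDeriv j (c k) s
        + ∑ k, iteratedDeriv i (f k) s * iteratedDeriv (j + 1) (c k) s) s := by
  rw [← sum_add_distrib]
  exact HasDerivAt.fun_sum fun k _ =>
    ((hf k).hasDerivAt_iteratedDeriv i s).mul ((hc k).hasDerivAt_iteratedDeriv j s)

theorem sum_iteratedDeriv_mul_iteratedDeriv_of_forall_lt (hf : ∀ k, ContDiff 𝕜 ∞ (f k))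
    (hc : ∀ k, ContDiff 𝕜 ∞ (c k)) {m : ℕ}
    (h0 : ∀ l < m, ∀ s, ∑ k, iteratedDeriv l (f k) s * c k s = 0) {i j : ℕ} (hij : i + j ≤ m)
    (s : 𝕜) :
    ∑ k, iteratedDeriv i (f k) s * iteratedDeriv j (c k) s
      = (-1) ^ j * ∑ k, iteratedDeriv (i + j) (f k) s * c k s := by
  induction j generalizing i s with
  | zero => simp
  | succ j ih =>
    have hconst :
        (fun s => ∑ k, iteratedDeriv i (f k) s * iteratedDeriv j (c k) s) = fun _ => 0 := by
      funext s
      rw [ih (by omega), h0 (i + j) (by omega), mul_zero]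
    have hderiv := hasDerivAt_sum_iteratedDeriv_mul hf hc i j s
    rw [hconst, ih (by omega), add_right_comm] at hderiv
    rw [← add_assoc, pow_succ]
    linear_combination -(hasDerivAt_const s (0 : 𝕜)).unique hderiv

end Leibniz

theorem Matrix.det_updateRow_eq_sum_mul_adjugate {n α : Type*} [Fintype n] [DecidableEq n]
    [CommRing α] (A : Matrix n n α) (l : n) (v : n → α) :
    (A.updateRow l v).det = ∑ k, v k * adjugate A k l := by
  rw [← cramer_transpose_apply, cramer_eq_adjugate_mulVec, mulVec, dotProduct,
    ← adjugate_transpose]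
  simp only [transpose_apply, mul_comm]

section Wronskian

variable {𝕜 : Type*} [NontriviallyNormedField 𝕜]

theorem contDiff_matrix_det {ι : Type*} [Fintype ι] [DecidableEq ι] {n : ℕ∞ω}
    {M : 𝕜 → Matrix ι ι 𝕜} (hM : ∀ i j, ContDiff 𝕜 n fun s => M s i j) :
    ContDiff 𝕜 n fun s => (M s).det := by
  simp only [det_apply]
  exact ContDiff.sum fun σ _ => (contDiff_prod fun i _ => hM _ _).const_smul _

theorem contDiff_matrix_adjugate_apply {ι : Type*} [Fintype ι] [DecidableEq ι] {n : ℕ∞ω}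
    {M : 𝕜 → Matrix ι ι 𝕜} (hM : ∀ i j, ContDiff 𝕜 n fun s => M s i j) (k l : ι) :
    ContDiff 𝕜 n fun s => adjugate (M s) k l := by
  simp only [adjugate_apply]
  refine contDiff_matrix_det fun i j => ?_
  by_cases hi : i = l
  · simp only [hi, updateRow_self]
    exact contDiff_const
  · simpa only [updateRow_ne hi] using hM i j

variable {n : ℕ} {f : Fin (n + 1) → 𝕜 → 𝕜}

noncomputable def wronskianMatrix {m : ℕ} (f : Fin m → 𝕜 → 𝕜) (s : 𝕜) :
    Matrix (Fin m) (Fin m) 𝕜 :=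
  of fun i j => iteratedDeriv i (f j) s

noncomputable def wronskianCofactor (f : Fin (n + 1) → 𝕜 → 𝕜) (k : Fin (n + 1)) (s : 𝕜) : 𝕜 :=
  adjugate (wronskianMatrix f s) k (Fin.last n)

theorem det_updateRow_wronskianMatrix_last (f : Fin (n + 1) → 𝕜 → 𝕜) (s : 𝕜)
    (v : Fin (n + 1) → 𝕜) :
    ((wronskianMatrix f s).updateRow (Fin.last n) v).det = ∑ k, v k * wronskianCofactor f k s :=
  det_updateRow_eq_sum_mul_adjugate _ _ _

theorem contDiff_wronskianCofactor (hf : ∀ k, ContDiff 𝕜 ∞ (f k)) (k : Fin (n + 1)) :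
    ContDiff 𝕜 ∞ (wronskianCofactor f k) :=
  contDiff_matrix_adjugate_apply (fun i j => by
    simpa only [wronskianMatrix, of_apply, iteratedDeriv_eq_iterate] using
      (hf j).iterate_deriv i) k _

theorem sum_iteratedDeriv_mul_wronskianCofactor (f : Fin (n + 1) → 𝕜 → 𝕜) {l : ℕ} (hl : l ≤ n)
    (s : 𝕜) :
    ∑ k, iteratedDeriv l (f k) s * wronskianCofactor f k s
      = if l = n then (wronskianMatrix f s).det else 0 := by
  have := congrFun₂ (mul_adjugate (wronskianMatrix f s)) ⟨l, by omega⟩ (Fin.last n)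
  simpa [mul_apply, one_apply, wronskianMatrix, wronskianCofactor, Fin.ext_iff] using this

theorem det_iteratedDeriv_wronskianCofactor_ne_zero (hf : ∀ k, ContDiff 𝕜 ∞ (f k)) {t : 𝕜}
    (hW : (wronskianMatrix f t).det ≠ 0) :
    (of fun j k : Fin (n + 1) => iteratedDeriv j (wronskianCofactor f k) t).det ≠ 0 := by
  set A : Matrix (Fin (n + 1)) (Fin (n + 1)) 𝕜 :=
    of fun j k => iteratedDeriv j (wronskianCofactor f k) t
  have hentry : ∀ i j : Fin (n + 1), (i : ℕ) + j ≤ n →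
      (wronskianMatrix f t * Aᵀ) i j
        = (-1) ^ (j : ℕ) * if (i : ℕ) + j = n then (wronskianMatrix f t).det else 0 := by
    intro i j hij
    rw [← sum_iteratedDeriv_mul_wronskianCofactor f hij,
      ← sum_iteratedDeriv_mul_iteratedDeriv_of_forall_lt hf (contDiff_wronskianCofactor hf)
        (fun l hl s => by rw [sum_iteratedDeriv_mul_wronskianCofactor f hl.le, if_neg hl.ne]) hij]
    rfl
  have hdet := det_of_antitriangular (wronskianMatrix f t * Aᵀ) fun i j hj => by
    rw [Fin.lt_def, Fin.val_rev] at hj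
    rw [hentry i j (by omega), if_neg (by omega), mul_zero]
  rw [det_mul, det_transpose] at hdet
  have hantidiagonal : ∀ i, (wronskianMatrix f t * Aᵀ) i i.rev ≠ 0 := fun i => by
    have hi : (i : ℕ) + i.rev = n := by rw [Fin.val_rev]; omega
    rw [hentry i i.rev hi.le, if_pos hi]
    exact mul_ne_zero (pow_ne_zero _ (by norm_num)) hW
  have hsign : ((Equiv.Perm.sign (Fin.revPerm (n := n + 1)) : ℤ) : 𝕜) ≠ 0 := by
    rcases Int.units_eq_one_or (Equiv.Perm.sign (Fin.revPerm (n := n + 1))) with h | h <;>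
      simp [h]
  refine right_ne_zero_of_mul (a := (wronskianMatrix f t).det) ?_
  rw [hdet]
  exact mul_ne_zero hsign (prod_ne_zero_iff.mpr fun i _ => hantidiagonal i)

end Wronskian

/-- Let `V` be an `N`-dimensional space of entire functions with basis `f₁, …, f_N`,
and for `t` define `g_V(t, u)` as the determinant of the `N × N` matrix whose first
`N-1` rows are `(f₁^{(i-1)}(t), …, f_N^{(i-1)}(t))`, `i = 1, …, N-1`, and whose last
row is `(f₁(u), …, f_N(u))`.  If `t` is not a zero of the Wronskian
`Wr(f₁, …, f_N)`, then the functions `u ↦ ∂_t^j g_V(t, u)`, `j = 0, …, N-1`, form a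
basis of `V` (they are linearly independent and span `V`). -/
theorem stmt8 {N : ℕ} (hN : 1 ≤ N) (f : Fin N → ℂ → ℂ)
    (hf : ∀ j, Differentiable ℂ (f j)) (hind : LinearIndependent ℂ f)
    (t : ℂ) (g : ℂ → ℂ → ℂ)
    (hg : ∀ s u : ℂ, g s u = Matrix.det (Matrix.of fun i j : Fin N =>
        if (i : ℕ) = N - 1 then f j u else iteratedDeriv (i : ℕ) (f j) s))
    (hW : Matrix.det (Matrix.of fun i j : Fin N => iteratedDeriv (i : ℕ) (f j) t) ≠ 0) :
    LinearIndependent ℂ (fun j : Fin N => fun u : ℂ => iteratedDeriv (j : ℕ) (fun s => g s u) t)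
      ∧ Submodule.span ℂ
          (Set.range fun j : Fin N => fun u : ℂ => iteratedDeriv (j : ℕ) (fun s => g s u) t)
        = Submodule.span ℂ (Set.range f) := by
  obtain ⟨n, rfl⟩ : ∃ n, N = n + 1 := ⟨N - 1, by omega⟩
  have hf' : ∀ k, ContDiff ℂ ∞ (f k) := fun k => (hf k).contDiff
  have hg' : ∀ s u, g s u = ∑ k, f k u * wronskianCofactor f k s := fun s u => by
    rw [hg, ← det_updateRow_wronskianMatrix_last]
    congr 1
    ext i j
    rcases eq_or_ne i (Fin.last n) with rfl | hi
    · simp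
    · have hi' : (i : ℕ) ≠ n := by simpa [Fin.ext_iff] using hi
      simp [updateRow_ne hi, wronskianMatrix, hi']
  set A : Matrix (Fin (n + 1)) (Fin (n + 1)) ℂ :=
    of fun j k => iteratedDeriv j (wronskianCofactor f k) t
  have hfamily : (fun j : Fin (n + 1) => fun u => iteratedDeriv j (fun s => g s u) t)
      = Fintype.linearCombination ℂ f ∘ A.row := by
    ext j u
    simp_rw [hg']
    rw [iteratedDeriv_fun_sum fun k _ =>
      ((contDiff_const.mul (contDiff_wronskianCofactor hf' k)).of_le (mod_cast le_top)).contDiffAt]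
    simp [Fintype.linearCombination_apply, A, mul_comm]
  have hA : IsUnit A :=
    (isUnit_iff_isUnit_det A).mpr (isUnit_iff_ne_zero.mpr
      (det_iteratedDeriv_wronskianCofactor_ne_zero hf' hW))
  rw [hfamily]
  exact ⟨hind.fintypeLinearCombination_comp_row (linearIndependent_rows_of_isUnit hA),
    span_range_fintypeLinearCombination_comp_row f (span_range_row_eq_top_of_isUnit hA)⟩
end

section
/- For the space V = span(e^{h₁u}, …, e^{h_N u}) of pure exponentials with distinct complex exponents h₁,…,h_N, and any t ∈ ℂ and partition λ with at most N parts, the Plücker coordinate of V about u = t indexed by λ — i.e. the determinant det((d/du)^{λ_{N−i+1}+i−1} f_j(t))_{1≤i,j≤N} with f_j(u) = e^{h_j u} — equals e^{(h₁+⋯+h_N)t} · Δ(h₁,…,h_N) · s_λ(h₁,…,h_N), hence the vector of Plücker coordinates is (up to a common nonzero scalar) the vector of Schur polynomial values (s_λ(h₁,…,h_N))_λ. -/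
/-! Since `(d/du)^k e^{h u} = h^k e^{h u}`, column `j` of the Wronskian-type matrix is
`e^{h_j t}` times column `j` of the alternant `(h_j^{k_i})`; pulling these factors out of
the determinant leaves the alternant, which is `Δ · s_λ` by the bialternant formula. -/

theorem Matrix.det_iteratedDeriv_cexp_const_mul {ι : Type*} [Fintype ι] [DecidableEq ι]
    (k : ι → ℕ) (h : ι → ℂ) (t : ℂ) :
    (Matrix.of fun i j => iteratedDeriv (k i) (fun u : ℂ => Complex.exp (h j * u)) t).det
      = Complex.exp ((∑ j, h j) * t) * (Matrix.of fun i j => h j ^ k i).det := by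
  have hcol : (Matrix.of fun i j => iteratedDeriv (k i) (fun u : ℂ => Complex.exp (h j * u)) t)
      = Matrix.of fun i j => Complex.exp (h j * t) * Matrix.of (fun i j => h j ^ k i) i j := by
    ext i j
    simp only [Matrix.of_apply, iteratedDeriv_cexp_const_mul]
    ring
  rw [hcol, Matrix.det_mul_row, Finset.sum_mul, Complex.exp_sum]

theorem stmt9_general {N : ℕ} (h : Fin N → ℂ) (t : ℂ)
    (lam : Fin N → ℕ) (s : ℂ)
    (hs : (∏ p ∈ Finset.univ.filter fun p : Fin N × Fin N => p.1 < p.2,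
          (h p.2 - h p.1)) * s
        = Matrix.det (Matrix.of fun i j : Fin N => h j ^ (lam (Fin.rev i) + (i : ℕ)))) :
    Matrix.det (Matrix.of fun i j : Fin N =>
        iteratedDeriv (lam (Fin.rev i) + (i : ℕ)) (fun u : ℂ => Complex.exp (h j * u)) t)
      = Complex.exp ((∑ j : Fin N, h j) * t)
          * (∏ p ∈ Finset.univ.filter fun p : Fin N × Fin N => p.1 < p.2,
              (h p.2 - h p.1)) * s := by
  rw [Matrix.det_iteratedDeriv_cexp_const_mul, mul_assoc, hs]

/-- For the space `V = span(e^{h₁u}, …, e^{h_N u})` of pure exponentials with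
distinct exponents, any `t ∈ ℂ`, and any partition `λ` with at most `N` parts
(given as an antitone `lam : Fin N → ℕ`, zero-indexed so `λ₁ = lam 0`), the Plücker
coordinate of `V` about `u = t` indexed by `λ`, namely the determinant whose row
`i` (zero-indexed) consists of the derivatives of order `λ_{N-i} + i`
(one-indexed: order `λ_{N-i+1} + i - 1`) of the `f_j(u) = e^{h_j u}` at `t`, equals
`e^{(h₁+⋯+h_N)t} · Δ(h₁,…,h_N) · s_λ(h₁,…,h_N)`, where `Δ = ∏_{i<j}(h_j - h_i)` is
the Vandermonde determinant and `s_λ` is the Schur polynomial, pinned down by the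
bialternant formula `Δ · s_λ = det(h_j^{λ_{N-i} + i})_{i,j}`. -/
theorem stmt9 {N : ℕ} (h : Fin N → ℂ) (hdist : Function.Injective h) (t : ℂ)
    (lam : Fin N → ℕ) (hanti : Antitone lam) (s : ℂ)
    (hs : (∏ p ∈ Finset.univ.filter fun p : Fin N × Fin N => p.1 < p.2,
          (h p.2 - h p.1)) * s
        = Matrix.det (Matrix.of fun i j : Fin N => h j ^ (lam (Fin.rev i) + (i : ℕ)))) :
    Matrix.det (Matrix.of fun i j : Fin N =>
        iteratedDeriv (lam (Fin.rev i) + (i : ℕ)) (fun u : ℂ => Complex.exp (h j * u)) t)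
      = Complex.exp ((∑ j : Fin N, h j) * t)
          * (∏ p ∈ Finset.univ.filter fun p : Fin N × Fin N => p.1 < p.2,
              (h p.2 - h p.1)) * s :=
  stmt9_general h t lam s hs
end

section
/- Let V be the span of N quasi-exponentials e^{h_i u} p_i(u) where deg p_i = d_i, and suppose that whenever h_i = h_j with i ≠ j we have d_i ≠ d_j. If there are l distinct values among h₁,…,h_N with multiplicities m₁,…,m_l, then Wr(e^{h₁u}p₁, …, e^{h_N u}p_N) = e^{(h₁+⋯+h_N)u} g(u) for a polynomial g of degree exactly d₁ + ⋯ + d_N − C(m₁,2) − ⋯ − C(m_l,2), where C(m,2) = m(m−1)/2. -/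
/-!
Since `(e^{cu} q(u))' = e^{cu} ((D + c) q)(u)`, the Wronskian is `e^{(h₁+⋯+h_N)u}` times the
determinant `g` of the polynomial matrix `((D + h_j)^i p_j)_{ij}`. Expanding `(D + h_j)^i`
binomially and the determinant multilinearly in its columns writes `g` as a sum over
`r : Fin N → Fin N` of `∏_j D^{r_j} p_j` times the constant `det (C(i, r_j) h_j^{i - r_j})`, which
vanishes unless `r` is injective on the fibres of `h`. For such `r`, `∑ r_j ≥ ∑_l C(m_l, 2)`, with
equality exactly when `r` maps every fibre onto an initial segment of `ℕ`. Hence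
`deg g ≤ ∑ d_j - ∑_l C(m_l, 2)`, and the coefficient of that degree is `∏ lc(p_j)` times
`det T`, `T_ij = ∑_{k < m_j} d_j(d_j - 1)⋯(d_j - k + 1) C(i, k) h_j^{i-k}`.

If `x T = 0`, the polynomial `f = ∑ x_i X^i` of degree `< N` has Taylor coefficients `τ_k(c)` at
`c = h_j` with `∑_{k < m_j} d_j(d_j - 1)⋯(d_j - k + 1) τ_k(h_j) = 0` for all `j`: the polynomial
`∑_{k < m} τ_k(c) X(X - 1)⋯(X - k + 1)` of degree `< m` vanishes at the `m` distinct degrees `d_j`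
of a fibre, so `τ_k(c) = 0` for `k < m`. Then `f` has `∑ m_l = N` roots counted with
multiplicity, so `f = 0`; thus `det T ≠ 0` and `deg g` is exactly `∑ d_j - ∑_l C(m_l, 2)`.
-/

open Polynomial Finset

theorem Nat.add_one_choose_two (n : ℕ) : (n + 1).choose 2 = n.choose 2 + n := by
  rw [Nat.choose_succ_succ', Nat.choose_one_right, add_comm]

namespace Finset

theorem choose_two_card_le_sum (t : Finset ℕ) : (#t).choose 2 ≤ ∑ x ∈ t, x := by
  induction t using Finset.induction_on_max with
  | empty => simp
  | insert a s has ih =>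
    have ha : a ∉ s := fun ha => lt_irrefl a (has a ha)
    have hs : #s ≤ a := by
      simpa using card_le_card (fun x hx => mem_range.2 (has x hx) : s ⊆ range a)
    rw [card_insert_of_notMem ha, sum_insert ha, Nat.add_one_choose_two]
    omega

theorem sum_eq_choose_two_card_iff (t : Finset ℕ) :
    ∑ x ∈ t, x = (#t).choose 2 ↔ ∀ x ∈ t, x < #t := by
  refine ⟨fun heq x hx => ?_, fun hlt => ?_⟩
  · by_contra! hx'
    obtain ⟨n, hn⟩ := Nat.exists_eq_add_one.2 (card_pos.2 ⟨x, hx⟩)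
    have herase := choose_two_card_le_sum (t.erase x)
    rw [card_erase_of_mem hx, hn, Nat.add_sub_cancel] at herase
    have hsplit := sum_erase_add t id hx
    rw [hn, Nat.add_one_choose_two] at heq
    simp only [id] at hsplit
    omega
  · have hrange : t = range #t :=
      eq_of_subset_of_card_le (fun x hx => mem_range.2 (hlt x hx)) (card_range _).le
    rw [hrange, card_range, sum_range_id, Nat.choose_two_right]

end Finset

namespace Polynomial

section CommRing

variable {R : Type*} [CommRing R]

theorem coeff_prod_sum_of_natDegree_le {ι : Type*} (s : Finset ι) (f : ι → R[X]) (n : ι → ℕ)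
    (hf : ∀ i ∈ s, (f i).natDegree ≤ n i) :
    (∏ i ∈ s, f i).coeff (∑ i ∈ s, n i) = ∏ i ∈ s, (f i).coeff (n i) := by
  classical
  induction s using Finset.cons_induction with
  | empty => simp
  | cons a s ha ih =>
    rw [prod_cons, sum_cons, coeff_mul_add_eq_of_natDegree_le (hf a (mem_cons_self a s))
        ((natDegree_prod_le s f).trans (sum_le_sum fun i hi => hf i (mem_cons_of_mem hi))),
      ih fun i hi => hf i (mem_cons_of_mem hi), prod_cons]

variable {ι : Type*} (s : Finset ι) (p : ι → R[X]) (r : ι → ℕ)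

theorem natDegree_prod_iterate_derivative_le :
    (∏ j ∈ s, derivative^[r j] (p j)).natDegree ≤ ∑ j ∈ s, (p j).natDegree - ∑ j ∈ s, r j := by
  by_cases hz : ∃ j ∈ s, (p j).natDegree < r j
  · obtain ⟨j, hj, hlt⟩ := hz
    rw [prod_eq_zero hj (iterate_derivative_eq_zero hlt), natDegree_zero]
    exact Nat.zero_le _
  · push Not at hz
    rw [← sum_tsub_distrib _ hz]
    exact (natDegree_prod_le _ _).trans (sum_le_sum fun j _ => natDegree_iterate_derivative _ _)

theorem coeff_prod_iterate_derivative :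
    (∏ j ∈ s, derivative^[r j] (p j)).coeff (∑ j ∈ s, (p j).natDegree - ∑ j ∈ s, r j) =
      ∏ j ∈ s, ((p j).natDegree.descFactorial (r j) : R) * (p j).leadingCoeff := by
  by_cases hz : ∃ j ∈ s, (p j).natDegree < r j
  · obtain ⟨j, hj, hlt⟩ := hz
    rw [prod_eq_zero hj (iterate_derivative_eq_zero hlt), coeff_zero,
      prod_eq_zero hj (by rw [Nat.descFactorial_eq_zero_iff_lt.2 hlt, Nat.cast_zero, zero_mul])]
  · push Not at hz
    rw [← sum_tsub_distrib _ hz, coeff_prod_sum_of_natDegree_le _ _ _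
      fun j _ => natDegree_iterate_derivative _ _]
    refine prod_congr rfl fun j _ => ?_
    rw [coeff_iterate_derivative, Nat.sub_add_cancel (hz j ‹_›), nsmul_eq_mul, coeff_natDegree]

end CommRing

theorem eq_zero_of_taylor_coeff_eq_zero {R : Type*} [CommRing R] [IsDomain R] {p : R[X]}
    (s : Finset R) (m : R → ℕ) (hdeg : p.degree < ↑(∑ c ∈ s, m c))
    (htaylor : ∀ c ∈ s, ∀ k < m c, (taylor c p).coeff k = 0) : p = 0 := by
  classical
  by_contra hp
  have hmult : ∀ c ∈ s, m c ≤ p.roots.count c := fun c hc => by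
    rw [count_roots, rootMultiplicity_eq_natTrailingDegree, ← taylor_apply]
    exact le_natTrailingDegree (mt (taylor_eq_zero c p).1 hp) (htaylor c hc)
  have hsum : ∑ c ∈ s, m c ≤ p.natDegree :=
    calc ∑ c ∈ s, m c ≤ ∑ c ∈ s ∪ p.roots.toFinset, p.roots.count c :=
          (sum_le_sum hmult).trans (sum_le_sum_of_subset subset_union_left)
      _ = Multiset.card p.roots := Multiset.sum_count_eq_card fun c hc =>
            mem_union_right _ (Multiset.mem_toFinset.2 hc)
      _ ≤ p.natDegree := card_roots' p
  rw [degree_eq_natDegree hp, Nat.cast_lt] at hdeg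
  omega

theorem iteratedDeriv_eval {𝕜 : Type*} [NontriviallyNormedField 𝕜] (q : 𝕜[X])
    (k : ℕ) : iteratedDeriv k (fun v => q.eval v) = fun v => (derivative^[k] q).eval v := by
  induction k generalizing q with
  | zero => simp
  | succ k ih =>
    rw [iteratedDeriv_succ', _root_.funext fun v => q.deriv (x := v), ih,
      Function.iterate_succ_apply]

end Polynomial

namespace Matrix

theorem det_of_sum_mul {n κ R : Type*} [DecidableEq n] [Fintype n] [Fintype κ] [CommRing R]
    (v : n → κ → R) (w : n → κ → n → R) :
    (of fun i j => ∑ k, v j k * w j k i).det =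
      ∑ r : n → κ, (∏ j, v j (r j)) * (of fun i j => w j (r j) i).det := by
  classical
  rw [← det_transpose]
  have hrows : (of fun i j => ∑ k, v j k * w j k i)ᵀ = of fun j => ∑ k, v j k • w j k := by
    ext j i
    simp [Finset.sum_apply]
  rw [hrows]
  refine (MultilinearMap.map_sum detRowAlternating.toMultilinearMap
    fun j k => v j k • w j k).trans (sum_congr rfl fun r _ => ?_)
  rw [← det_transpose (of fun i j => w j (r j) i)]
  exact MultilinearMap.map_smul_univ detRowAlternating.toMultilinearMap _ _

end Matrix

theorem iteratedDeriv_cexp_mul_eval (c : ℂ) (q : ℂ[X]) (n : ℕ) (u : ℂ) :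
    iteratedDeriv n (fun v => Complex.exp (c * v) * q.eval v) u =
      Complex.exp (c * u) *
        ∑ k ∈ range (n + 1), (derivative^[k] q).eval u * (n.choose k * c ^ (n - k)) := by
  have hcomm : (fun v => Complex.exp (c * v) * q.eval v) =
      fun v => q.eval v * Complex.exp (c * v) := funext fun v => mul_comm _ _
  have hq : ContDiff ℂ n fun v => q.eval v := by simpa using q.contDiff_aeval (𝕜 := ℂ) n
  have hexp : ContDiff ℂ n fun v => Complex.exp (c * v) := by fun_prop
  rw [hcomm, iteratedDeriv_fun_mul hq.contDiffAt hexp.contDiffAt, mul_sum]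
  simp only [Polynomial.iteratedDeriv_eval, iteratedDeriv_cexp_const_mul]
  exact sum_congr rfl fun k _ => by ring

namespace QuasiExponential

open Matrix

section Fibres

variable {ι α : Type*} [Fintype ι] [DecidableEq α]

def fiberCard (h : ι → α) (c : α) : ℕ := #{j | h j = c}

def collisionCount (h : ι → α) : ℕ := ∑ c ∈ univ.image h, (fiberCard h c).choose 2

theorem fiberCard_le_card (h : ι → α) (c : α) : fiberCard h c ≤ Fintype.card ι :=
  card_filter_le _ _

theorem sum_fiberCard (h : ι → α) : ∑ c ∈ univ.image h, fiberCard h c = Fintype.card ι :=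
  (card_eq_sum_card_image h univ).symm

variable {h : ι → α} {r : ι → ℕ}

theorem injOn_fiber (hr : ∀ i j, h i = h j → r i = r j → i = j) (c : α) :
    Set.InjOn r ({j | h j = c} : Finset ι) := by
  intro i hi j hj hij
  simp only [coe_filter, mem_univ, true_and, Set.mem_ofPred_eq] at hi hj
  exact hr i j (hi.trans hj.symm) hij

theorem choose_two_fiberCard_le_sum (hr : ∀ i j, h i = h j → r i = r j → i = j) (c : α) :
    (fiberCard h c).choose 2 ≤ ∑ j with h j = c, r j := by
  rw [fiberCard, ← card_image_of_injOn (injOn_fiber hr c),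
    ← sum_image (f := fun x => x) (injOn_fiber hr c)]
  exact choose_two_card_le_sum _

theorem sum_fiber_eq_choose_two_iff (hr : ∀ i j, h i = h j → r i = r j → i = j) (c : α) :
    ∑ j with h j = c, r j = (fiberCard h c).choose 2 ↔ ∀ j, h j = c → r j < fiberCard h c := by
  rw [fiberCard, ← card_image_of_injOn (injOn_fiber hr c),
    ← sum_image (f := fun x => x) (injOn_fiber hr c), sum_eq_choose_two_card_iff]
  simp

theorem collisionCount_le_sum (hr : ∀ i j, h i = h j → r i = r j → i = j) :
    collisionCount h ≤ ∑ j, r j := by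
  rw [← sum_fiberwise_of_maps_to fun j _ => mem_image_of_mem h (mem_univ j)]
  exact sum_le_sum fun c _ => choose_two_fiberCard_le_sum hr c

theorem sum_eq_collisionCount_iff (hr : ∀ i j, h i = h j → r i = r j → i = j) :
    ∑ j, r j = collisionCount h ↔ ∀ j, r j < fiberCard h (h j) := by
  rw [← sum_fiberwise_of_maps_to fun j _ => mem_image_of_mem h (mem_univ j), collisionCount,
    eq_comm, sum_eq_sum_iff_of_le fun c _ => choose_two_fiberCard_le_sum hr c]
  simp only [mem_image, mem_univ, true_and, forall_exists_index, forall_apply_eq_imp_iff,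
    eq_comm (a := (fiberCard h _).choose 2), sum_fiber_eq_choose_two_iff hr]
  exact ⟨fun H j => H j j rfl, fun H j i hi => hi ▸ H i⟩

theorem card_filter_lt_eq_collisionCount [LinearOrder ι] (h : ι → α) :
    #{q : ι × ι | q.1 < q.2 ∧ h q.1 = h q.2} = collisionCount h := by
  rw [card_eq_sum_card_fiberwise (f := fun q => h q.1) (t := univ.image h)
    fun q _ => mem_image_of_mem h (mem_univ q.1)]
  refine sum_congr rfl fun c _ => ?_
  rw [fiberCard, ← card_product_filter_lt]
  congr 1
  ext q
  simp only [mem_filter, mem_univ, true_and, mem_product]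
  constructor
  · rintro ⟨⟨hlt, heq⟩, rfl⟩
    exact ⟨⟨rfl, heq.symm⟩, hlt⟩
  · rintro ⟨⟨rfl, heq⟩, hlt⟩
    exact ⟨⟨hlt, heq.symm⟩, rfl⟩

end Fibres

theorem eq_zero_of_sum_descFactorial_mul_eq_zero {K ι : Type*} [Field K] [CharZero K]
    (s : Finset ι) (d : ι → ℕ) (hd : Set.InjOn d s) (τ : ℕ → K)
    (hτ : ∀ j ∈ s, ∑ k ∈ range #s, ((d j).descFactorial k : K) * τ k = 0) :
    ∀ k < #s, τ k = 0 := by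
  intro k hk
  let S : Sequence K := ⟨descPochhammer K, fun k => by
    rw [degree_eq_natDegree (monic_descPochhammer K k).ne_zero, descPochhammer_natDegree]⟩
  refine linearIndependent_iff'.1 S.linearIndependent (range #s) τ ?_ k (mem_range.2 hk)
  refine eq_zero_of_natDegree_lt_card_of_eval_eq_zero _ (f := fun j : s => (d j : K))
    (fun a b hab => Subtype.ext (hd a.2 b.2 (Nat.cast_injective hab))) (fun j => ?_) ?_
  · simp only [S, eval_finsetSum, eval_smul, smul_eq_mul, descPochhammer_eval_eq_descFactorial]
    simpa only [mul_comm] using hτ j j.2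
  · rw [Fintype.card_coe]
    refine (natDegree_sum_le_of_forall_le _ _ (n := #s - 1) fun i hi => ?_).trans_lt (by omega)
    refine (natDegree_smul_le _ _).trans ?_
    simp only [S, descPochhammer_natDegree]
    have := mem_range.1 hi
    omega

section CommRing

variable {R : Type*} [CommRing R] {N : ℕ}

/-- Entry `(i, j)` is `(D + h j)^i (p j)` expanded binomially, so that `e^{h_j u}` times its value
at `u` is the `i`-th derivative of `e^{h_j u} p_j(u)`. -/
noncomputable def wronskianMatrix (h : Fin N → R) (p : Fin N → R[X]) :
    Matrix (Fin N) (Fin N) R[X] :=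
  of fun i j => ∑ k : Fin N, derivative^[k] (p j) * C ((i : ℕ).choose k * h j ^ ((i : ℕ) - k) : R)

def binomMatrix (h : Fin N → R) (r : Fin N → ℕ) : Matrix (Fin N) (Fin N) R :=
  of fun i j => (i : ℕ).choose (r j) * h j ^ ((i : ℕ) - r j)

theorem det_wronskianMatrix_eq_sum (h : Fin N → R) (p : Fin N → R[X]) :
    (wronskianMatrix h p).det =
      ∑ r : Fin N → Fin N, (∏ j, derivative^[r j] (p j)) * C (binomMatrix h fun j => r j).det := by
  rw [wronskianMatrix, det_of_sum_mul]
  refine sum_congr rfl fun r _ => ?_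
  rw [RingHom.map_det]
  rfl

theorem injective_on_fibers_of_det_binomMatrix_ne_zero {h : Fin N → R} {r : Fin N → ℕ}
    (hdet : (binomMatrix h r).det ≠ 0) : ∀ i j, h i = h j → r i = r j → i = j :=
  fun i j hh hr => by_contra fun hij =>
    hdet (det_zero_of_column_eq hij fun k => by simp [binomMatrix, hh, hr])

variable [DecidableEq R]

theorem natDegree_det_wronskianMatrix_le (h : Fin N → R) (p : Fin N → R[X]) :
    (wronskianMatrix h p).det.natDegree ≤ ∑ j, (p j).natDegree - collisionCount h := by
  rw [det_wronskianMatrix_eq_sum]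
  refine natDegree_sum_le_of_forall_le _ _ fun r _ => ?_
  by_cases hdet : (binomMatrix h fun j => (r j : ℕ)).det = 0
  · simp [hdet]
  refine (natDegree_mul_C_le _ _).trans ((natDegree_prod_iterate_derivative_le _ _ _).trans ?_)
  exact Nat.sub_le_sub_left
    (collisionCount_le_sum (injective_on_fibers_of_det_binomMatrix_ne_zero hdet)) _

theorem coeff_prod_iterate_derivative_of_injective_on_fibers {h : Fin N → R} {r : Fin N → ℕ}
    (p : Fin N → R[X]) (hr : ∀ i j, h i = h j → r i = r j → i = j) :
    (∏ j, derivative^[r j] (p j)).coeff (∑ j, (p j).natDegree - collisionCount h) =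
      ∏ j, if r j < fiberCard h (h j) then
        ((p j).natDegree.descFactorial (r j) : R) * (p j).leadingCoeff else 0 := by
  by_cases hall : ∀ j, r j < fiberCard h (h j)
  · rw [← (sum_eq_collisionCount_iff hr).2 hall, coeff_prod_iterate_derivative]
    exact prod_congr rfl fun j _ => (if_pos (hall j)).symm
  push Not at hall
  obtain ⟨j₀, hj₀⟩ := hall
  refine Eq.trans ?_ (prod_eq_zero (mem_univ j₀) (if_neg hj₀.not_gt)).symm
  have hlt : collisionCount h < ∑ j, r j := (collisionCount_le_sum hr).lt_of_ne fun heq =>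
    hj₀.not_gt ((sum_eq_collisionCount_iff hr).1 heq.symm j₀)
  by_cases hsum : ∑ j, r j ≤ ∑ j, (p j).natDegree
  · exact coeff_eq_zero_of_natDegree_lt
      ((natDegree_prod_iterate_derivative_le _ _ _).trans_lt (by omega))
  · obtain ⟨j, -, hj⟩ := exists_lt_of_sum_lt (not_le.1 hsum)
    rw [prod_eq_zero (mem_univ j) (iterate_derivative_eq_zero hj), coeff_zero]

def topCoeffMatrix (h : Fin N → R) (d : Fin N → ℕ) : Matrix (Fin N) (Fin N) R :=
  of fun i j => ∑ k ∈ range (fiberCard h (h j)),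
    (d j).descFactorial k * ((i : ℕ).choose k * h j ^ ((i : ℕ) - k))

theorem coeff_det_wronskianMatrix (h : Fin N → R) (p : Fin N → R[X]) :
    (wronskianMatrix h p).det.coeff (∑ j, (p j).natDegree - collisionCount h) =
      (∏ j, (p j).leadingCoeff) * (topCoeffMatrix h fun j => (p j).natDegree).det := by
  set w : Fin N → Fin N → R := fun j k => if (k : ℕ) < fiberCard h (h j) then
    ((p j).natDegree.descFactorial k : R) * (p j).leadingCoeff else 0
  have hterm : ∀ r : Fin N → Fin N,
      ((∏ j, derivative^[r j] (p j)) * C (binomMatrix h fun j => r j).det).coeff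
        (∑ j, (p j).natDegree - collisionCount h) =
      (∏ j, w j (r j)) * (binomMatrix h fun j => r j).det := by
    intro r
    rw [coeff_mul_C]
    by_cases hdet : (binomMatrix h fun j => (r j : ℕ)).det = 0
    · simp [hdet]
    rw [coeff_prod_iterate_derivative_of_injective_on_fibers p
      (injective_on_fibers_of_det_binomMatrix_ne_zero hdet)]
  rw [det_wronskianMatrix_eq_sum, finsetSum_coeff, sum_congr rfl fun r _ => hterm r, ← det_mul_row]
  refine (det_of_sum_mul w fun j k i => (i : ℕ).choose k * h j ^ ((i : ℕ) - k)).symm.trans ?_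
  congr 1
  ext i j
  have hfilter : {k ∈ range N | k < fiberCard h (h j)} = range (fiberCard h (h j)) := by
    have := (fiberCard_le_card h (h j)).trans_eq (Fintype.card_fin N)
    ext k
    simp only [mem_filter, mem_range]
    omega
  simp only [of_apply, topCoeffMatrix, w, ite_mul, zero_mul, mul_sum]
  rw [Fin.sum_univ_eq_sum_range (fun k => if k < fiberCard h (h j) then
      ((p j).natDegree.descFactorial k : R) * (p j).leadingCoeff *
        ((i : ℕ).choose k * h j ^ ((i : ℕ) - k)) else 0), ← sum_filter,
    hfilter]
  exact sum_congr rfl fun k _ => by ring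

end CommRing

theorem det_topCoeffMatrix_ne_zero {K : Type*} [Field K] [CharZero K] [DecidableEq K] {N : ℕ}
    (h : Fin N → K) (d : Fin N → ℕ) (hd : ∀ i j, h i = h j → d i = d j → i = j) :
    (topCoeffMatrix h d).det ≠ 0 := by
  rw [Ne, ← exists_vecMul_eq_zero_iff]
  rintro ⟨x, hx0, hx⟩
  set f : K[X] := ∑ i : Fin N, C (x i) * X ^ (i : ℕ) with hf
  have htaylor (c : K) (k : ℕ) :
      (taylor c f).coeff k = ∑ i, x i * ((i : ℕ).choose k * c ^ ((i : ℕ) - k)) := by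
    rw [taylor_coeff]
    simp only [hf, C_mul_X_pow_eq_monomial, map_sum, hasseDeriv_monomial, eval_finsetSum,
      eval_monomial]
    exact sum_congr rfl fun i _ => by ring
  have hfiber (j : Fin N) : ∑ k ∈ range (fiberCard h (h j)),
      ((d j).descFactorial k : K) * (taylor (h j) f).coeff k = 0 := by
    simp only [htaylor, mul_sum]
    rw [sum_comm]
    simpa [vecMul, dotProduct, topCoeffMatrix, mul_sum, mul_left_comm] using congrFun hx j
  have hvanish : ∀ c ∈ univ.image h, ∀ k < fiberCard h c, (taylor c f).coeff k = 0 := by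
    intro c hc
    obtain ⟨j, -, rfl⟩ := mem_image.1 hc
    refine eq_zero_of_sum_descFactorial_mul_eq_zero _ d (injOn_fiber hd (h j)) _ fun i hi => ?_
    have := hfiber i
    rwa [(mem_filter.1 hi).2] at this
  have hdeg : f.degree < ↑(∑ c ∈ univ.image h, fiberCard h c) := by
    rw [sum_fiberCard, Fintype.card_fin]
    exact degree_sum_fin_lt x
  have hf0 := eq_zero_of_taylor_coeff_eq_zero _ _ hdeg hvanish
  refine hx0 (funext fun i => ?_)
  simpa [hf, finsetSum_coeff, coeff_C_mul_X_pow, Fin.val_eq_val] using congrArg (coeff · i) hf0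

theorem det_iteratedDeriv_eq {N : ℕ} (h : Fin N → ℂ) (p : Fin N → ℂ[X]) (u : ℂ) :
    (of fun i j : Fin N =>
        iteratedDeriv i (fun v => Complex.exp (h j * v) * (p j).eval v) u).det =
      Complex.exp ((∑ i, h i) * u) * (wronskianMatrix h p).det.eval u := by
  have hentry : (of fun i j : Fin N =>
        iteratedDeriv i (fun v => Complex.exp (h j * v) * (p j).eval v) u) =
      of fun i j =>
        Complex.exp (h j * u) * (evalRingHom u).mapMatrix (wronskianMatrix h p) i j := by
    ext i j
    rw [of_apply, of_apply, iteratedDeriv_cexp_mul_eval, RingHom.mapMatrix_apply, map_apply,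
      wronskianMatrix, of_apply, coe_evalRingHom, eval_finsetSum,
      Fin.sum_univ_eq_sum_range (α := ℂ) (fun k : ℕ => (derivative^[k] (p j) *
        C (((i : ℕ).choose k * h j ^ ((i : ℕ) - k) : ℂ))).eval u)]
    simp only [eval_mul, eval_C]
    congr 1
    refine sum_subset (range_subset_range.2 i.isLt) fun k _ hk => ?_
    rw [Nat.choose_eq_zero_of_lt (by rw [mem_range, not_lt] at hk; omega)]
    simp
  rw [hentry, det_mul_row, ← Complex.exp_sum, sum_mul, ← RingHom.map_det, coe_evalRingHom]

end QuasiExponential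

open QuasiExponential

/-- Let `V` be spanned by `N` quasi-exponentials `e^{h_i u} p_i(u)` with
`d_i = deg p_i`, such that whenever `h_i = h_j` with `i ≠ j` we have `d_i ≠ d_j`.
Then `Wr(e^{h₁u}p₁, …, e^{h_Nu}p_N) = e^{(h₁+⋯+h_N)u} g(u)` for a polynomial `g`
of degree exactly `d₁ + ⋯ + d_N − ∑_l C(m_l, 2)`, where `m₁, …, m_l` are the
multiplicities of the distinct values among `h₁, …, h_N`; equivalently,
`∑_l C(m_l, 2)` is the number of pairs `i < j` with `h_i = h_j`. -/
theorem stmt10 {N : ℕ} (h : Fin N → ℂ) (p : Fin N → Polynomial ℂ)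
    (hp : ∀ i, p i ≠ 0)
    (hd : ∀ i j, i ≠ j → h i = h j → (p i).natDegree ≠ (p j).natDegree) :
    ∃ g : Polynomial ℂ, g ≠ 0 ∧
      g.natDegree = (∑ i : Fin N, (p i).natDegree)
          - (Finset.univ.filter fun q : Fin N × Fin N => q.1 < q.2 ∧ h q.1 = h q.2).card ∧
      ∀ u : ℂ, Matrix.det (Matrix.of fun i j : Fin N =>
          iteratedDeriv (i : ℕ) (fun v : ℂ => Complex.exp (h j * v) * (p j).eval v) u)
        = Complex.exp ((∑ i : Fin N, h i) * u) * g.eval u := by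
  have hcoeff : (wronskianMatrix h p).det.coeff (∑ j, (p j).natDegree - collisionCount h) ≠ 0 := by
    rw [coeff_det_wronskianMatrix]
    refine mul_ne_zero (prod_ne_zero_iff.2 fun j _ => leadingCoeff_ne_zero.2 (hp j))
      (det_topCoeffMatrix_ne_zero h _ fun i j hh hdeg => by_contra fun hij => hd i j hij hh hdeg)
  refine ⟨(wronskianMatrix h p).det, fun h0 => hcoeff (by rw [h0, coeff_zero]), ?_,
    det_iteratedDeriv_eq h p⟩
  rw [card_filter_lt_eq_collisionCount]
  exact natDegree_eq_of_le_of_coeff_ne_zero (natDegree_det_wronskianMatrix_le h p) hcoeff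
end

section
/- Let f₁, …, f_N be entire functions and t ∈ ℂ. Suppose fᵢ has a zero at u = t of order exactly cᵢ ≥ 0, and the multiset {c₁, …, c_N} has l distinct values with multiplicities m₁, …, m_l. Then the Wronskian Wr(f₁, …, f_N) has a zero at u = t of order at least c₁ + ⋯ + c_N + C(m₁,2) + ⋯ + C(m_l,2) − C(N,2). -/
/-!
Write `W_r(u) = det (f_j^{(r_i)}(u))` for a row-order vector `r`, so that the Wronskian is `W_r`
with `r_i = i`. By the product rule `W_r' = ∑_i W_{r + e_i}`, hence every derivative of order
`k` of `W_r` is a sum of determinants `W_{r'}` with `∑ r' = ∑ r + k`, and it suffices to show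
that `W_r(t) = 0` whenever `∑ r < ∑ c + #{i < j | c_i = c_j}`. If two rows have equal order the
determinant vanishes. Otherwise, a term `∏_j f_j^{(r_{σ j})}(t)` of the Leibniz expansion can
only be nonzero if `r_{σ j} ≥ c_j` for all `j`; for a fixed `j`, the indices `i` with `c_i = c_j`
and `r_{σ i} < r_{σ j}` then have distinct orders in `[c_j, r_{σ j})`. Summing over `j` counts
each unordered pair with equal `c` once, so `∑ c + #{i < j | c_i = c_j} ≤ ∑ r`.
-/

open Finset Matrix
open scoped ContDiff

section Pairs

variable {ι : Type*} [Fintype ι]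

theorem card_filter_lt_and_eq_le_sub {c s : ι → ℕ} (hs : Function.Injective s)
    (hcs : ∀ i, c i ≤ s i) (b : ι) : #{a | s a < s b ∧ c a = c b} ≤ s b - c b :=
  calc #{a | s a < s b ∧ c a = c b}
      ≤ #(Ico (c b) (s b)) := card_le_card_of_injOn s (fun a ha => by
          simp only [coe_filter, mem_univ, true_and, Set.mem_ofPred_eq] at ha
          simpa [← ha.2] using ⟨hcs a, ha.1⟩) hs.injOn
    _ = s b - c b := Nat.card_Ico _ _

variable [LinearOrder ι]

theorem card_filter_lt_eq_card_filter_lt_comp {α : Type*} [LinearOrder α] {s : ι → α}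
    (hs : Function.Injective s) {p : ι → ι → Prop} [DecidableRel p]
    (hp : ∀ a b, p a b → p b a) :
    #{q : ι × ι | q.1 < q.2 ∧ p q.1 q.2} = #{q : ι × ι | s q.1 < s q.2 ∧ p q.1 q.2} := by
  refine card_nbij' (fun q => if s q.1 < s q.2 then q else q.swap)
    (fun q => if q.1 < q.2 then q else q.swap) ?_ ?_ ?_ ?_
  all_goals
    rintro ⟨a, b⟩ hab
    have := hs.ne_iff (x := a) (y := b)
    simp only [coe_filter, mem_univ, true_and, Set.mem_ofPred_eq] at hab ⊢
    split_ifs <;> grind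

theorem sum_add_card_pairs_le {c s : ι → ℕ} (hs : Function.Injective s)
    (hcs : ∀ i, c i ≤ s i) :
    ∑ i, c i + #{q : ι × ι | q.1 < q.2 ∧ c q.1 = c q.2} ≤ ∑ i, s i := by
  rw [card_filter_lt_eq_card_filter_lt_comp (p := fun a b => c a = c b) hs
    fun _ _ => Eq.symm, card_filter, Fintype.sum_prod_type_right, ← sum_add_distrib]
  refine sum_le_sum fun b _ => ?_
  have hb := card_filter_lt_and_eq_le_sub hs hcs b
  rw [card_filter] at hb
  have := hcs b
  dsimp only
  omega

end Pairs

section GenWronskian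

variable {𝕜 ι : Type*} [NontriviallyNormedField 𝕜] [Fintype ι] [DecidableEq ι]

noncomputable def genWronskian (f : ι → 𝕜 → 𝕜) (r : ι → ℕ) (u : 𝕜) : 𝕜 :=
  (of fun i j => iteratedDeriv (r i) (f j) u).det

variable {f : ι → 𝕜 → 𝕜}

theorem sum_prod_iteratedDeriv_add_single (r : ι → ℕ) (σ : Equiv.Perm ι) (u : 𝕜) :
    ∑ i, ∏ j, iteratedDeriv ((r + Pi.single i 1 : ι → ℕ) (σ j)) (f j) u =
      ∑ j₀, (∏ j ∈ univ.erase j₀, iteratedDeriv (r (σ j)) (f j) u) •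
        iteratedDeriv (r (σ j₀) + 1) (f j₀) u := by
  rw [← Equiv.sum_comp σ]
  refine sum_congr rfl fun j₀ _ => ?_
  rw [smul_eq_mul, mul_comm, ← mul_prod_erase univ _ (mem_univ j₀)]
  congr 1
  · simp
  · refine prod_congr rfl fun j hj => ?_
    rw [Pi.add_apply, Pi.single_apply, if_neg (σ.injective.ne (ne_of_mem_erase hj)), add_zero]

theorem hasDerivAt_genWronskian (hf : ∀ j, ContDiff 𝕜 ∞ (f j)) (r : ι → ℕ) (u : 𝕜) :
    HasDerivAt (genWronskian f r) (∑ i, genWronskian f (r + Pi.single i 1) u) u := by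
  have hder (j : ι) (n : ℕ) :
      HasDerivAt (iteratedDeriv n (f j)) (iteratedDeriv (n + 1) (f j) u) u := by
    rw [iteratedDeriv_succ]
    exact ((hf j).differentiable_iteratedDeriv n
      (mod_cast WithTop.coe_lt_top _)).differentiableAt.hasDerivAt
  unfold genWronskian
  simp only [det_apply', of_apply]
  refine (HasDerivAt.fun_sum fun σ _ =>
    (HasDerivAt.fun_finsetProd fun j _ => hder j (r (σ j))).const_mul
      ((Equiv.Perm.sign σ : ℤ) : 𝕜)).congr_deriv ?_
  rw [sum_comm]
  simp only [← mul_sum, sum_prod_iteratedDeriv_add_single]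

theorem deriv_genWronskian (hf : ∀ j, ContDiff 𝕜 ∞ (f j)) (r : ι → ℕ) :
    deriv (genWronskian f r) = ∑ i, genWronskian f (r + Pi.single i 1) := by
  ext u
  rw [(hasDerivAt_genWronskian hf r u).deriv, Finset.sum_apply]

theorem contDiff_genWronskian (hf : ∀ j, ContDiff 𝕜 ∞ (f j)) (r : ι → ℕ) :
    ContDiff 𝕜 ∞ (genWronskian f r) := by
  have hder (j : ι) (n : ℕ) : ContDiff 𝕜 ∞ (iteratedDeriv n (f j)) := by
    rw [iteratedDeriv_eq_iterate]
    exact (hf j).iterate_deriv n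
  unfold genWronskian
  simp only [det_apply', of_apply]
  exact ContDiff.sum fun σ _ => contDiff_const.mul (contDiff_prod fun j _ => hder j _)

theorem iteratedDeriv_genWronskian_eq_zero (hf : ∀ j, ContDiff 𝕜 ∞ (f j)) {t : 𝕜} {B : ℕ}
    (hB : ∀ r : ι → ℕ, ∑ i, r i < B → genWronskian f r t = 0) (k : ℕ) (r : ι → ℕ)
    (hk : k + ∑ i, r i < B) : iteratedDeriv k (genWronskian f r) t = 0 := by
  induction k generalizing r with
  | zero => simpa using hB r (by simpa using hk)
  | succ k ih =>
    have hsmooth (r' : ι → ℕ) : ContDiffAt 𝕜 k (genWronskian f r') t :=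
      (contDiff_genWronskian hf r').contDiffAt.of_le (mod_cast le_top)
    rw [iteratedDeriv_succ', deriv_genWronskian hf, iteratedDeriv_sum fun i _ => hsmooth _]
    refine sum_eq_zero fun i _ => ih _ ?_
    simp only [Pi.add_apply, sum_add_distrib, sum_pi_single', mem_univ, if_true]
    omega

end GenWronskian

theorem genWronskian_eq_zero {𝕜 ι : Type*} [NontriviallyNormedField 𝕜] [Fintype ι]
    [LinearOrder ι] {f : ι → 𝕜 → 𝕜} {t : 𝕜} {c : ι → ℕ}
    (hc : ∀ j, ∀ k < c j, iteratedDeriv k (f j) t = 0) {r : ι → ℕ}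
    (hr : ∑ i, r i < ∑ i, c i + #{q : ι × ι | q.1 < q.2 ∧ c q.1 = c q.2}) :
    genWronskian f r t = 0 := by
  by_cases hinj : Function.Injective r
  · refine (det_apply' _).trans (sum_eq_zero fun σ _ => ?_)
    obtain ⟨j, hj⟩ : ∃ j, r (σ j) < c j := by
      by_contra! hle
      have := sum_add_card_pairs_le (hinj.comp σ.injective) hle
      rw [Function.comp_def, Equiv.sum_comp σ r] at this
      omega
    rw [prod_eq_zero (mem_univ j) (hc j _ hj), mul_zero]
  · obtain ⟨i, i', hii', hne⟩ := Function.not_injective_iff.mp hinj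
    exact det_zero_of_row_eq hne (by ext j; simp [hii'])

/-- Let `f₁, …, f_N` be entire functions such that `f_i` has a zero at `u = t` of
order exactly `c_i ≥ 0`, and suppose the multiset `{c₁, …, c_N}` has distinct
values with multiplicities `m₁, …, m_l`.  Then the Wronskian `Wr(f₁, …, f_N)` has
a zero at `u = t` of order at least
`c₁ + ⋯ + c_N + ∑_l C(m_l, 2) − C(N, 2)`; here `∑_l C(m_l, 2)` equals the number
of pairs `i < j` with `c_i = c_j`. -/
theorem stmt11 {N : ℕ} (f : Fin N → ℂ → ℂ) (hf : ∀ i, Differentiable ℂ (f i))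
    (t : ℂ) (c : Fin N → ℕ)
    (hc : ∀ i, (∀ k < c i, iteratedDeriv k (f i) t = 0) ∧ iteratedDeriv (c i) (f i) t ≠ 0) :
    ∀ k : ℕ, (k : ℤ) < (∑ i : Fin N, (c i : ℤ))
        + ((Finset.univ.filter fun q : Fin N × Fin N => q.1 < q.2 ∧ c q.1 = c q.2).card : ℤ)
        - (Nat.choose N 2 : ℤ) →
      iteratedDeriv k
        (fun u : ℂ => Matrix.det (Matrix.of fun i j : Fin N => iteratedDeriv (i : ℕ) (f j) u))
        t = 0 := by
  intro k hk
  have hrows : ∑ i : Fin N, (i : ℕ) = N.choose 2 := by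
    rw [Fin.sum_univ_eq_sum_range (fun i => i), sum_range_id, Nat.choose_two_right]
  refine iteratedDeriv_genWronskian_eq_zero (fun i => (hf i).contDiff)
    (fun r hr => genWronskian_eq_zero (fun i => (hc i).1) hr) k (fun i => i) ?_
  have hcast : ((∑ i, c i : ℕ) : ℤ) = ∑ i, (c i : ℤ) := Nat.cast_sum _ _
  show k + ∑ i : Fin N, (i : ℕ) < _
  omega
end

section
/- Let c > 0 and let B be the infinite lower-triangular matrix representing multiplication by e^{cu} on formal power series in the basis (u^i/i!)_{i≥0}, i.e. B_{i,j} = C(i,j) c^{i−j} for i ≥ j and B_{i,j} = 0 otherwise. Then B is triangularly totally positive: for every m and all indices i₁ < ⋯ < i_m and j₁ < ⋯ < j_m with i₁ ≥ j₁, …, i_m ≥ j_m, the minor det(B_{i_a, j_b})_{1≤a,b≤m} is strictly positive. -/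
/-!
Conjugating by the diagonal matrices `diag (c ^ i)` and `diag (c ^ (-j))` reduces the claim to
`c = 1`, i.e. to the minors `P(I, J) = det (C(i_a, j_b))` of the Pascal matrix. These are
positive by induction on `∑ (i_a - j_a)`. When `I = J` the minor is unitriangular. Otherwise,
the identity `(k + 1) C(n, k + 1) = (n - k) C(n, k)`, applied to one column at a time, together
with multilinearity of the determinant gives
`∑_b (j_b + 1) P(I, J + e_b) = (∑ i_a - ∑ j_a) P(I, J)`.
On the left, every term is either zero (a column has been pushed past its row, or two columns
are equal) or positive by induction. The term at the last `b` with `j_b < i_b` is positive.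
-/

open Matrix Finset

namespace Matrix

variable {R : Type*} [CommRing R]

theorem sum_det_updateCol_mul {n : Type*} [Fintype n] [DecidableEq n] (M : Matrix n n R)
    (g : n → R) : ∑ b, (M.updateCol b fun a => g a * M a b).det = (∑ a, g a) * M.det := by
  simp only [det_apply, updateCol_apply, Finset.mul_sum]
  rw [Finset.sum_comm]
  refine Finset.sum_congr rfl fun σ _ => ?_
  have hprod : ∀ b, ∏ x, (if x = b then g (σ x) * M (σ x) b else M (σ x) x) =
      g (σ b) * ∏ x, M (σ x) x := fun b => by
    have := Finset.prod_ite_eq' univ b (fun x => g (σ x))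
    simp only [mem_univ, if_true] at this
    rw [← this, ← Finset.prod_mul_distrib]
    exact Finset.prod_congr rfl fun x _ => by split_ifs with h <;> simp [h]
  simp only [hprod, ← Finset.smul_sum, ← Finset.sum_mul, Equiv.sum_comp σ g, mul_smul_comm]

theorem det_eq_zero_of_upperRight_eq_zero {m : ℕ} (M : Matrix (Fin m) (Fin m) R) (b : Fin m)
    (h : ∀ a c, a ≤ b → b ≤ c → M a c = 0) : M.det = 0 := by
  rw [det_apply]
  refine Finset.sum_eq_zero fun σ _ => ?_
  obtain ⟨c, hbc, hσc⟩ : ∃ c, b ≤ c ∧ σ c ≤ b := by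
    by_contra! hσ
    have hcard : #(Ici b) ≤ #(Ioi b) :=
      card_le_card_of_injOn σ (fun x hx => mem_Ioi.2 (hσ x (mem_Ici.1 hx))) σ.injective.injOn
    rw [Fin.card_Ici, Fin.card_Ioi] at hcard
    omega
  rw [Finset.prod_eq_zero (f := fun x => M (σ x) x) (mem_univ c) (h _ _ hσc hbc), smul_zero]

end Matrix

theorem Nat.cast_succ_mul_choose_succ_right {R : Type*} [CommRing R] (n k : ℕ) :
    ((k : R) + 1) * (n.choose (k + 1) : R) = ((n : R) - k) * n.choose k := by
  rcases le_or_gt k n with h | h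
  · have := congrArg (Nat.cast (R := R)) (Nat.choose_succ_right_eq n k)
    push_cast [Nat.cast_sub h] at this
    linear_combination this
  · simp [Nat.choose_eq_zero_of_lt h, Nat.choose_eq_zero_of_lt (h.trans k.lt_succ_self)]

section UpdateSucc

variable {m : ℕ} {j : Fin m → ℕ}

theorem StrictMono.monotone_update_succ (hj : StrictMono j) (b : Fin m) :
    Monotone (Function.update j b (j b + 1)) := by
  intro a c hac
  rcases hac.lt_or_eq with hac | rfl
  · have := hj hac
    rcases eq_or_ne a b with rfl | hab
    · rcases eq_or_ne c a with rfl | hca <;> simp [*]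
    · rcases eq_or_ne c b with rfl | hcb <;> simp [*] <;> omega
  · rfl

theorem StrictMono.update_succ (hj : StrictMono j) {b : Fin m}
    (hb : ∀ c, b < c → j b + 1 < j c) : StrictMono (Function.update j b (j b + 1)) := by
  intro a c hac
  rcases eq_or_ne a b with rfl | hab
  · simpa [hac.ne'] using hb c hac
  · have := hj hac
    rcases eq_or_ne c b with rfl | hcb
    · simp [hab]; omega
    · simpa [hab, hcb]

theorem exists_lt_forall_succ_lt {i : Fin m → ℕ} (hi : StrictMono i) (hij : ∀ a, j a ≤ i a)
    (hne : j ≠ i) : ∃ b, j b < i b ∧ ∀ c, b < c → j b + 1 < j c := by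
  obtain ⟨b, hb, hmax⟩ := (univ.filter fun a => j a < i a).exists_max_image id <| by
    by_contra! hempty
    exact hne <| funext fun a => by
      have := filter_eq_empty_iff.1 hempty (mem_univ a)
      have := hij a
      omega
  rw [mem_filter] at hb
  refine ⟨b, hb.2, fun c hbc => ?_⟩
  have hc : ¬ j c < i c := fun hc => (hmax c (mem_filter.2 ⟨mem_univ c, hc⟩)).not_gt hbc
  have := hi hbc
  have := hij c
  omega

end UpdateSucc

section Pascal

variable (R : Type*) [CommRing R] {m : ℕ}

def pascalMinor (i j : Fin m → ℕ) : Matrix (Fin m) (Fin m) R :=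
  of fun a b => ((i a).choose (j b) : R)

variable {R} {i j : Fin m → ℕ}

theorem det_pascalMinor_self (hi : StrictMono i) : (pascalMinor R i i).det = 1 := by
  have htri : (pascalMinor R i i).IsLowerTriangular := fun a b (hab : a < b) => by
    simp [pascalMinor, Nat.choose_eq_zero_of_lt (hi hab)]
  rw [det_of_isLowerTriangular _ htri]
  simp [pascalMinor]

theorem det_pascalMinor_eq_zero_of_lt (hi : Monotone i) (hj : Monotone j) {b : Fin m}
    (hb : i b < j b) : (pascalMinor R i j).det = 0 :=
  det_eq_zero_of_upperRight_eq_zero _ b fun a c hab hbc => by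
    simp [pascalMinor, Nat.choose_eq_zero_of_lt ((hi hab).trans_lt (hb.trans_le (hj hbc)))]

theorem pascalMinor_update_succ (b : Fin m) :
    pascalMinor R i (Function.update j b (j b + 1)) =
      (pascalMinor R i j).updateCol b fun a => ((i a).choose (j b + 1) : R) := by
  ext a c
  rcases eq_or_ne c b with rfl | hcb <;> simp [pascalMinor, *]

theorem sum_mul_det_pascalMinor_update_succ :
    ∑ b, ((j b : R) + 1) * (pascalMinor R i (Function.update j b (j b + 1))).det =
      (∑ a, (i a : R) - ∑ a, (j a : R)) * (pascalMinor R i j).det := by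
  set M := pascalMinor R i j
  have hcol : ∀ b, ((j b : R) + 1) • (fun a => ((i a).choose (j b + 1) : R)) =
      (fun a => (i a : R) * M a b) + (-(j b : R)) • fun a => M a b := fun b => by
    ext a
    simp [M, pascalMinor, Nat.cast_succ_mul_choose_succ_right]
    ring
  calc _ = ∑ b, ((M.updateCol b fun a => (i a : R) * M a b).det + -(j b : R) * M.det) := by
        refine sum_congr rfl fun b _ => ?_
        rw [pascalMinor_update_succ, ← det_updateCol_smul, hcol, det_updateCol_add,
          det_updateCol_smul, updateCol_eq_self]
    _ = _ := by
        rw [sum_add_distrib, sum_det_updateCol_mul, ← sum_mul, sum_neg_distrib]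
        ring

theorem det_pascalMinor_update_succ_nonneg [LinearOrder R] [IsStrictOrderedRing R]
    (hi : StrictMono i) (hj : StrictMono j) (b : Fin m)
    (hpos : j b < i b → (∀ c, b < c → j b + 1 < j c) →
      0 < (pascalMinor R i (Function.update j b (j b + 1))).det) :
    0 ≤ (pascalMinor R i (Function.update j b (j b + 1))).det := by
  by_cases hib : j b < i b
  · by_cases hc : ∃ c, b < c ∧ j c = j b + 1
    · obtain ⟨c, hbc, hc⟩ := hc
      refine (det_zero_of_column_eq hbc.ne fun a => ?_).ge
      simp [pascalMinor, hbc.ne', hc]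
    · push Not at hc
      exact (hpos hib fun c hbc => lt_of_le_of_ne (hj hbc) (hc c hbc).symm).le
  · exact (det_pascalMinor_eq_zero_of_lt hi.monotone (hj.monotone_update_succ b)
      (b := b) (by simp; omega)).ge

theorem det_pascalMinor_pos [LinearOrder R] [IsStrictOrderedRing R] (hi : StrictMono i)
    (hj : StrictMono j) (hij : ∀ a, j a ≤ i a) : 0 < (pascalMinor R i j).det := by
  obtain ⟨d, hd⟩ := Nat.exists_eq_add_of_le (sum_le_sum fun a (_ : a ∈ univ) => hij a)
  induction d generalizing j with
  | zero =>
    obtain rfl : j = i := funext <| (sum_eq_sum_iff_of_le fun a _ => hij a).1 hd.symm |>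
      fun h a => h a (mem_univ a)
    rw [det_pascalMinor_self hi]
    exact one_pos
  | succ d ih =>
    have hpos : ∀ b, j b < i b → (∀ c, b < c → j b + 1 < j c) →
        0 < (pascalMinor R i (Function.update j b (j b + 1))).det := fun b hb hc => by
      refine ih (hj.update_succ hc) (fun a => ?_) ?_
      · rcases eq_or_ne a b with rfl | hab <;> simp [*]
      · rw [sum_update_of_mem (mem_univ b), hd,
          sum_eq_add_sum_sdiff_singleton_of_mem (mem_univ b) j]
        omega
    obtain ⟨b₀, hb₀, hb₀c⟩ := exists_lt_forall_succ_lt hi hij fun h => by subst h; omega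
    have hsum : 0 < ∑ b, ((j b : R) + 1) * (pascalMinor R i (Function.update j b (j b + 1))).det :=
      sum_pos' (fun b _ => mul_nonneg (by positivity)
          (det_pascalMinor_update_succ_nonneg hi hj b (hpos b)))
        ⟨b₀, mem_univ _, mul_pos (by positivity) (hpos b₀ hb₀ hb₀c)⟩
    rw [sum_mul_det_pascalMinor_update_succ, ← Nat.cast_sum, ← Nat.cast_sum, hd, Nat.cast_add,
      add_sub_cancel_left] at hsum
    exact pos_of_mul_pos_right hsum d.succ.cast_nonneg

end Pascal

theorem choose_mul_pow_sub_eq_diagonal_mul_pascalMinor_mul_diagonal {K : Type*} [Field K]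
    {c : K} (hc : c ≠ 0) {m : ℕ} (i j : Fin m → ℕ) :
    (of fun a b => ((i a).choose (j b) : K) * c ^ (i a - j b)) =
      diagonal (fun a => c ^ i a) * pascalMinor K i j * diagonal fun b => (c ^ j b)⁻¹ := by
  ext a b
  rw [mul_diagonal, diagonal_mul, pascalMinor, of_apply, of_apply]
  rcases le_or_gt (j b) (i a) with h | h
  · rw [pow_sub₀ c hc h]
    ring
  · simp [Nat.choose_eq_zero_of_lt h]

/-- Let `c > 0` and let `B` be the infinite lower-triangular matrix representing
multiplication by `e^{cu}` on formal power series in the basis `(u^i / i!)`, i.e.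
`B i j = C(i, j) c^{i-j}` for `i ≥ j` and `0` otherwise (note `C(i, j) = 0` when
`i < j`, so the formula below covers both cases).  Then `B` is triangularly
totally positive: for all strictly increasing row indices `i₁ < ⋯ < i_m` and
column indices `j₁ < ⋯ < j_m` with `i_a ≥ j_a` for all `a`, the minor
`det (B (i_a) (j_b))` is strictly positive. -/
theorem stmt12 (c : ℝ) (hc : 0 < c) (m : ℕ) (i j : Fin m → ℕ)
    (hi : StrictMono i) (hj : StrictMono j) (hij : ∀ a, j a ≤ i a) :
    0 < Matrix.det (Matrix.of fun a b : Fin m =>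
        (Nat.choose (i a) (j b) : ℝ) * c ^ (i a - j b)) := by
  rw [choose_mul_pow_sub_eq_diagonal_mul_pascalMinor_mul_diagonal hc.ne', det_mul, det_mul,
    det_diagonal, det_diagonal]
  have := det_pascalMinor_pos (R := ℝ) hi hj hij
  positivity
end

section
/- Let K ⊆ L be finite sets, σ ∈ S_L a permutation of L acting on (ℂ^N)^{⊗L} by permuting tensor factors, and h an N × N matrix. Let h^{(S)} denote the diagonal action of h on the tensor factors indexed by S. Then the partial trace over the factors in L∖K satisfies Tr_{L∖K}(h^{(L)} ∘ σ) = h^{(K)} ∘ Tr_{L∖K}(h^{(L∖K)} ∘ σ) as operators on (ℂ^N)^{⊗K}. -/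
theorem Fintype.prod_ite_eq_one_zero {ι α R : Type*} [Fintype ι] [DecidableEq α]
    [CommMonoidWithZero R] (c f : ι → α) :
    (∏ k, if c k = f k then (1 : R) else 0) = if c = f then 1 else 0 := by
  simp only [Finset.prod_boole, Finset.mem_univ, forall_const, funext_iff]

/-- Let `K ⊆ L` be finite sets (modelled as `L = K ⊕ M`, with `M = L ∖ K`), let
`σ ∈ S_L` act on `(ℂ^N)^{⊗L}` by permuting tensor factors, and let `h^{(S)}` be
the diagonal action of an `N × N` matrix `h` on the tensor factors indexed by `S`.
Identifying operators on `(ℂ^N)^{⊗L}` with matrices indexed by `L → Fin N` (so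
that `h^{(L)} ∘ σ` has entries `∏_{k∈L} h (φ k) (ψ (σ⁻¹ k))`, and `h^{(M)} ∘ σ`
has entries `∏_{k∈M} h (φ k) (ψ (σ⁻¹ k)) · ∏_{k∈K} δ_{φ k, ψ (σ⁻¹ k)}`), the
partial trace over the factors in `M = L ∖ K` satisfies
`Tr_{L∖K}(h^{(L)} ∘ σ) = h^{(K)} ∘ Tr_{L∖K}(h^{(L∖K)} ∘ σ)`
as operators on `(ℂ^N)^{⊗K}`. -/
theorem stmt15 {N : ℕ} (K M : Type*) [Fintype K] [Fintype M]
    [DecidableEq K] [DecidableEq M]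
    (σ : Equiv.Perm (K ⊕ M)) (h : Matrix (Fin N) (Fin N) ℂ) :
    (Matrix.of fun a b : K → Fin N => ∑ g : M → Fin N,
        ∏ k : K ⊕ M, h (Sum.elim a g k) (Sum.elim b g (σ.symm k)))
      = (Matrix.of fun a b : K → Fin N => ∏ k : K, h (a k) (b k))
        * (Matrix.of fun a b : K → Fin N => ∑ g : M → Fin N,
            (∏ k : M, h (g k) (Sum.elim b g (σ.symm (Sum.inr k))))
              * ∏ k : K, (if a k = Sum.elim b g (σ.symm (Sum.inl k)) then (1 : ℂ) else 0)) := by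
  ext a b
  -- The `K`-deltas collapse the matrix product onto the single intermediate index
  -- `k ↦ (b, g) (σ⁻¹ k)`, where `h^{(K)}` supplies exactly the missing `K`-factors.
  simp only [Matrix.mul_apply, Matrix.of_apply, Fintype.prod_ite_eq_one_zero, mul_ite, mul_one,
    mul_zero, Finset.mul_sum]
  rw [Finset.sum_comm]
  refine Finset.sum_congr rfl fun g _ => ?_
  rw [Fintype.sum_ite_eq', Fintype.prod_sum_type]
  simp only [Sum.elim_inl, Sum.elim_inr]
end

section
/- Let N ≥ 1 and let V be an N-dimensional space of N-times continuously differentiable functions with basis f₁, …, f_N, and let g be N-times differentiable. Define D_V(g) = Wr(f₁, …, f_N, g) / Wr(f₁, …, f_N) at a point t where Wr(f₁, …, f_N)(t) ≠ 0. Then D_V(g)(t) = Σ_{i=0}^{N} (−1)^i (Δ_{(1^i)}(t) / Δ_∅(t)) · g^{(N−i)}(t), where Δ_{(1^i)}(t) = (−1)^{C(N,2)} det(f_j^{(λ_a + N − a)}(t))_{1≤a,j≤N} is the Plücker coordinate of V about u = t indexed by the single-column partition λ = (1^i), and Δ_∅(t) = Wr(f₁, …, f_N)(t). In particular D_V is a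 monic order-N linear differential operator annihilating V. -/
/-!
Expand the `(N+1) × (N+1)` Wronskian of `f₁, …, f_N, g` along its last column. The cofactor of
`g^{(k)}` is, up to `(-1)^{k+N}`, the minor built from the derivatives of the `f_j` of orders
`0, …, N` with `k` omitted. Read from the bottom row up, these are the row orders of
`Δ_{(1^{N-k})}`, and reversing the `N` rows costs exactly the sign `(-1)^{C(N,2)}` built into `Δ`.
For `k = N` the minor is the Wronskian of the `f_j`, so `Δ_∅ = Wr(f)`; for `g = f_j` the big
matrix has two equal columns.
-/

open Equiv Matrix

namespace Fin

lemma revPerm_succ (n : ℕ) :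
    (revPerm : Perm (Fin (n + 1))) =
      finRotate (n + 1) * (finSuccEquivLast.symm.permCongr (revPerm : Perm (Fin n)).optionCongr) := by
  ext i
  induction i using lastCases with
  | last => simp [rev_last]
  | cast i =>
      simp [rev_castSucc, finSuccEquivLast_castSucc, finSuccEquivLast_symm_some,
        coeSucc_eq_succ]

lemma sign_revPerm : ∀ n : ℕ, Perm.sign (revPerm : Perm (Fin n)) = (-1) ^ n.choose 2
  | 0 => by simp [Subsingleton.elim (revPerm : Perm (Fin 0)) 1]
  | n + 1 => by
      rw [revPerm_succ, map_mul, sign_finRotate, Perm.sign_permCongr, optionCongr_sign,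
        sign_revPerm n, Nat.add_sub_cancel, ← pow_add]
      congr 1
      simp [Nat.choose_succ_succ']

/-- Row `rev b` of the orders of `Δ_{(1^i)}`, `i = n - k`, is row `b` of `0, …, n` with `k`
omitted. -/
lemma succAbove_eq_ite_rev {n : ℕ} (k : Fin (n + 1)) (b : Fin n) :
    (k.succAbove b : ℕ) =
      if ((rev b : Fin n) : ℕ) < n - k then n - (rev b : ℕ) else n - 1 - (rev b : ℕ) := by
  rcases lt_or_ge b.castSucc k with h | h
  · rw [succAbove_of_castSucc_lt _ _ h]
    rw [lt_def, val_castSucc] at h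
    simp only [val_rev, val_castSucc]
    split_ifs <;> omega
  · rw [succAbove_of_le_castSucc _ _ h]
    rw [le_def, val_castSucc] at h
    simp only [val_rev, val_succ]
    split_ifs <;> omega

end Fin

namespace Matrix

variable {R : Type*} [CommRing R]

lemma det_submatrix_rev {n : ℕ} (M : Matrix (Fin n) (Fin n) R) :
    (M.submatrix Fin.rev id).det = (-1) ^ n.choose 2 * M.det := by
  have h := det_permute Fin.revPerm M
  rw [Fin.sign_revPerm] at h
  push_cast at h
  exact h

end Matrix

section DerivMatrix

variable {𝕜 : Type*} [NontriviallyNormedField 𝕜] {n : ℕ}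

noncomputable def derivMatrix {m : ℕ} (f : Fin n → 𝕜 → 𝕜) (ord : Fin m → ℕ) (t : 𝕜) :
    Matrix (Fin m) (Fin n) 𝕜 :=
  of fun a j => iteratedDeriv (ord a) (f j) t

lemma det_derivMatrix_succAbove (f : Fin n → 𝕜 → 𝕜) (t : 𝕜) (k : Fin (n + 1)) :
    (derivMatrix f (fun b => k.succAbove b) t).det = (-1) ^ n.choose 2 *
      (derivMatrix f (fun a => if (a : ℕ) < n - k then n - a else n - 1 - a) t).det := by
  have hrev : derivMatrix f (fun b => k.succAbove b) t =
      (derivMatrix f (fun a => if (a : ℕ) < n - k then n - a else n - 1 - a) t).submatrix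
        Fin.rev id := by
    ext b j
    simp only [derivMatrix, submatrix_apply, of_apply, id, Fin.succAbove_eq_ite_rev]
  rw [hrev, det_submatrix_rev]

lemma det_derivMatrix_snoc (f : Fin n → 𝕜 → 𝕜) (g : 𝕜 → 𝕜) (t : 𝕜) :
    (derivMatrix (Fin.snoc f g : Fin (n + 1) → 𝕜 → 𝕜) Fin.val t).det =
      ∑ k : Fin (n + 1), (-1) ^ (k + n : ℕ) * iteratedDeriv k g t *
        (derivMatrix f (fun b => k.succAbove b) t).det := by
  have hminor (k : Fin (n + 1)) :
      (derivMatrix (Fin.snoc f g : Fin (n + 1) → 𝕜 → 𝕜) Fin.val t).submatrix k.succAbove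
        Fin.castSucc = derivMatrix f (fun b => k.succAbove b) t := by
    ext b j
    simp [derivMatrix]
  rw [det_succ_column _ (Fin.last n)]
  simp only [Fin.succAbove_last, hminor, Fin.val_last]
  simp [derivMatrix]

lemma det_derivMatrix_snoc_self (f : Fin n → 𝕜 → 𝕜) (t : 𝕜) (j₀ : Fin n) :
    (derivMatrix (Fin.snoc f (f j₀) : Fin (n + 1) → 𝕜 → 𝕜) Fin.val t).det = 0 :=
  det_zero_of_column_eq (Fin.castSucc_lt_last j₀).ne fun a => by simp [derivMatrix]

end DerivMatrix

theorem stmt17_general {N : ℕ} (f : Fin N → ℝ → ℝ) (g : ℝ → ℝ) (t : ℝ)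
    (Δ : ℕ → ℝ)
    (hΔ : ∀ i : ℕ, Δ i = (-1 : ℝ) ^ Nat.choose N 2 *
        Matrix.det (Matrix.of fun a j : Fin N =>
          iteratedDeriv (if (a : ℕ) < i then N - (a : ℕ) else N - 1 - (a : ℕ)) (f j) t)) :
    Δ 0 = Matrix.det (Matrix.of fun i j : Fin N => iteratedDeriv (i : ℕ) (f j) t)
    ∧ Matrix.det (Matrix.of fun a j : Fin (N + 1) =>
          iteratedDeriv (a : ℕ) ((Fin.snoc f g : Fin (N + 1) → ℝ → ℝ) j) t)
        / Matrix.det (Matrix.of fun i j : Fin N => iteratedDeriv (i : ℕ) (f j) t)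
      = ∑ i ∈ Finset.range (N + 1),
          (-1 : ℝ) ^ i * (Δ i / Δ 0) * iteratedDeriv (N - i) g t
    ∧ ∀ j₀ : Fin N, Matrix.det (Matrix.of fun a j : Fin (N + 1) =>
        iteratedDeriv (a : ℕ) ((Fin.snoc f (f j₀) : Fin (N + 1) → ℝ → ℝ) j) t) = 0 := by
  have hminor (k : Fin (N + 1)) : Δ (N - k) = (derivMatrix f (fun b => k.succAbove b) t).det :=
    (hΔ _).trans (det_derivMatrix_succAbove f t k).symm
  have hΔ₀ : Δ 0 = (derivMatrix f Fin.val t).det := by simpa using hminor (Fin.last N)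
  refine ⟨hΔ₀, ?_, det_derivMatrix_snoc_self f t⟩
  change (derivMatrix (Fin.snoc f g : Fin (N + 1) → ℝ → ℝ) Fin.val t).det
    / (derivMatrix f Fin.val t).det = _
  rw [← hΔ₀, det_derivMatrix_snoc, Finset.sum_div, ← Fin.sum_univ_eq_sum_range]
  refine Fintype.sum_equiv Fin.revPerm _ _ fun k => ?_
  have hk : (k : ℕ) ≤ N := Fin.is_le k
  have hsign : (-1 : ℝ) ^ (k + N : ℕ) = (-1) ^ (N - k) := by
    rw [show (k + N : ℕ) = N - k + 2 * k by omega, pow_add, pow_mul, neg_one_sq, one_pow, mul_one]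
  simp only [Fin.revPerm_apply, Fin.val_rev, Nat.add_sub_add_right, Nat.sub_sub_self hk, hsign,
    ← hminor]
  ring

/-- Let `V` be an `N`-dimensional space (`N ≥ 1`) of `N`-times continuously
differentiable functions with basis `f₁, …, f_N`, and let `g` be `N`-times
continuously differentiable.  At a point `t` where `Wr(f₁, …, f_N)(t) ≠ 0`,
`D_V(g)(t) := Wr(f₁, …, f_N, g)(t) / Wr(f₁, …, f_N)(t)` satisfies
`D_V(g)(t) = ∑_{i=0}^{N} (−1)^i (Δ_{(1^i)}(t) / Δ_∅(t)) · g^{(N−i)}(t)`,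
where `Δ_{(1^i)}(t) = (−1)^{C(N,2)} det(f_j^{(order a)}(t))` is the Plücker
coordinate indexed by the single-column partition `(1^i)`, with row orders
(zero-indexed row `a`) equal to `N - a` for `a < i` and `N - 1 - a` for `a ≥ i`
(i.e. the orders `0, …, N` with `N - i` omitted); in particular
`Δ_∅(t) = Wr(f₁, …, f_N)(t)`, and `D_V` annihilates `V`:
`Wr(f₁, …, f_N, f_{j₀})(t) = 0` for each `j₀`. -/
theorem stmt17 {N : ℕ} (hN : 1 ≤ N) (f : Fin N → ℝ → ℝ) (g : ℝ → ℝ)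
    (hf : ∀ j, ContDiff ℝ N (f j)) (hg : ContDiff ℝ N g) (t : ℝ)
    (hW : Matrix.det (Matrix.of fun i j : Fin N => iteratedDeriv (i : ℕ) (f j) t) ≠ 0)
    (Δ : ℕ → ℝ)
    (hΔ : ∀ i : ℕ, Δ i = (-1 : ℝ) ^ Nat.choose N 2 *
        Matrix.det (Matrix.of fun a j : Fin N =>
          iteratedDeriv (if (a : ℕ) < i then N - (a : ℕ) else N - 1 - (a : ℕ)) (f j) t)) :
    Δ 0 = Matrix.det (Matrix.of fun i j : Fin N => iteratedDeriv (i : ℕ) (f j) t)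
    ∧ Matrix.det (Matrix.of fun a j : Fin (N + 1) =>
          iteratedDeriv (a : ℕ) ((Fin.snoc f g : Fin (N + 1) → ℝ → ℝ) j) t)
        / Matrix.det (Matrix.of fun i j : Fin N => iteratedDeriv (i : ℕ) (f j) t)
      = ∑ i ∈ Finset.range (N + 1),
          (-1 : ℝ) ^ i * (Δ i / Δ 0) * iteratedDeriv (N - i) g t
    ∧ ∀ j₀ : Fin N, Matrix.det (Matrix.of fun a j : Fin (N + 1) =>
        iteratedDeriv (a : ℕ) ((Fin.snoc f (f j₀) : Fin (N + 1) → ℝ → ℝ) j) t) = 0 :=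
  stmt17_general f g t Δ hΔ
end
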